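/- Point-adjusted Recall, Recall_PA(g,p) = (Σ_{W ∈ I_1(g) with W ∩ p^{-1}(1) ≠ ∅} |W|) / |g^{-1}(1)|, satisfies Properties 1 and 5: (a) if A ∈ I_1(g), p(i) = q(i) for all i ∉ A, |I_1(p_A)| > 0 and |I_1(q_A)| = 0, then Recall_PA(g,p) > Recall_PA(g,q); (b) if N ∈ I_0(g), p(i) = q(i) for all i ∉ N, |p^{-1}(1)| = |q^{-1}(1)| and |I_1(p_N)| = |I_1(q_N)|, then Recall_PA(g,p) = Recall_PA(g,q). -/

import Mathlib

namespace TSAD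

open Finset

/-- The index domain `{1, …, n}`. -/
def dom (n : ℕ) : Finset ℕ := Finset.Icc 1 n

/-- The interval `[l, u]` represented by a pair. -/
def ivl (W : ℕ × ℕ) : Finset ℕ := Finset.Icc W.1 W.2

/-- The positions in `A` where the binary sequence `s` takes the value `1` (`true`). -/
def ones (A : Finset ℕ) (s : ℕ → Bool) : Finset ℕ := A.filter (fun i => s i = true)

/-- `runs A s v` is the set of maximal intervals `[l, u] ⊆ A` on which `s` is constantly `v`
(maximal among intervals contained in `A`).  For `A = dom n` this is `I_v(s)`;
for `A ⊆ dom n` it is `I_v(s_A)`. -/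
def runs (A : Finset ℕ) (s : ℕ → Bool) (v : Bool) : Finset (ℕ × ℕ) :=
  (A ×ˢ A).filter (fun W =>
    W.1 ≤ W.2 ∧ ivl W ⊆ A ∧ (∀ i ∈ ivl W, s i = v) ∧
    (W.1 - 1 ∈ A → s (W.1 - 1) ≠ v) ∧ (W.2 + 1 ∈ A → s (W.2 + 1) ≠ v))

/-- Specification of the function `α` used in the (A)LARM scores: it assigns to each
restriction `p_A` a value in `[0,1)`, depends only on the restriction, strictly increases
when a single `0` of `p_A` is changed to a `1`, satisfies alarm timing, and early bias. -/
structure AlphaSpec (α : Finset ℕ → (ℕ → Bool) → ℝ) : Prop where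
  mem_Ico : ∀ A p, α A p ∈ Set.Ico (0 : ℝ) 1
  restrict : ∀ A (p q : ℕ → Bool), (∀ i ∈ A, p i = q i) → α A p = α A q
  mono : ∀ A (p q : ℕ → Bool) (i : ℕ), i ∈ A → p i = true → q i = false →
    (∀ j, j ≠ i → p j = q j) → α A q < α A p
  timing : ∀ A (p q : ℕ → Bool), (ones A p).card = (ones A q).card →
    ∀ (hp : (ones A p).Nonempty) (hq : (ones A q).Nonempty),
      (ones A p).min' hp < (ones A q).min' hq → α A q < α A p
  earlyBias : ∀ A (p q : ℕ → Bool) (i j : ℕ), i ∈ A → j ∈ A → i < j →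
    p i = true → p j = false → q i = false → q j = true →
    (∀ k, k ≠ i → k ≠ j → p k = q k) → α A q < α A p

/-- Specification of the function `β` used in the (A)LARM scores: strictly increasing
with values in `[0,1]`. -/
structure BetaSpec (β : ℕ → ℝ) : Prop where
  mem_Icc : ∀ k, β k ∈ Set.Icc (0 : ℝ) 1
  strictMono : StrictMono β

/-- The LARM score. -/
noncomputable def LARM (n : ℕ) (α : Finset ℕ → (ℕ → Bool) → ℝ) (β : ℕ → ℝ)
    (g p : ℕ → Bool) : ℝ :=
  (1 / ((runs (dom n) g true).card : ℝ)) *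
    ∑ A ∈ (runs (dom n) g true).filter (fun A => 0 < (runs (ivl A) p true).card),
      (α (ivl A) p + 1) / 2 ^ ((runs (ivl A) p true).card)
  - 2 * ∑ N ∈ runs (dom n) g false, ((runs (ivl N) p true).card : ℝ)
  - ∑ N ∈ runs (dom n) g false, β ((ones (ivl N) p).card)

/-- `I_{01}(g)`: intervals that are a maximal `0`-run immediately followed by a maximal
`1`-run. -/
def runs01 (n : ℕ) (g : ℕ → Bool) : Finset (ℕ × ℕ) :=
  ((dom n) ×ˢ (dom n)).filter (fun W =>
    ∃ b ∈ Finset.Ico W.1 W.2,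
      (W.1, b) ∈ runs (dom n) g false ∧ (b + 1, W.2) ∈ runs (dom n) g true)

/-- `I_{10}(g)`: intervals that are a maximal `1`-run immediately followed by a maximal
`0`-run. -/
def runs10 (n : ℕ) (g : ℕ → Bool) : Finset (ℕ × ℕ) :=
  ((dom n) ×ˢ (dom n)).filter (fun W =>
    ∃ b ∈ Finset.Ico W.1 W.2,
      (W.1, b) ∈ runs (dom n) g true ∧ (b + 1, W.2) ∈ runs (dom n) g false)

/-- Early alarms `EA(p,g)`. -/
def EA (n : ℕ) (p g : ℕ → Bool) : Finset (ℕ × ℕ) :=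
  ((dom n) ×ˢ (dom n)).filter (fun A =>
    (∃ I ∈ runs01 n g, A ∈ runs (ivl I) p true) ∧
    (∃ i ∈ ivl A, g i = true) ∧ (∃ i ∈ ivl A, g i = false))

/-- Late alarms `LA(p,g)`. -/
def LA (n : ℕ) (p g : ℕ → Bool) : Finset (ℕ × ℕ) :=
  ((dom n) ×ˢ (dom n)).filter (fun A =>
    (∃ I ∈ runs10 n g, A ∈ runs (ivl I) p true) ∧
    (∃ i ∈ ivl A, g i = true) ∧ (∃ i ∈ ivl A, g i = false))

/-- True false alarms `TA(p,g)`. -/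
def TA (n : ℕ) (p g : ℕ → Bool) : Finset (ℕ × ℕ) :=
  (runs (dom n) p true).filter (fun A =>
    (∀ i ∈ ivl A, g i = false) ∧
    ∀ B ∈ EA n p g ∪ LA n p g, ¬ ivl A ⊆ ivl B)

/-- Detected anomalies `DA(p,g)`. -/
def DA (n : ℕ) (p g : ℕ → Bool) : Finset (ℕ × ℕ) :=
  (runs (dom n) g true).filter (fun A =>
    ∃ B ∈ runs (dom n) p true,
      (ivl B ∩ ivl A).Nonempty ∧
      (B.1 ∈ ivl A ∨ ∀ i ∈ Finset.Ico B.1 A.1, g i = false))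

/-- The ALARM score with alarm tolerance `t` (the averaged term is `0` when
`DA(p,g) = ∅`, since in Lean `0 / 0 = 0`). -/
noncomputable def ALARM (n t : ℕ) (α : Finset ℕ → (ℕ → Bool) → ℝ) (β : ℕ → ℝ)
    (g p : ℕ → Bool) : ℝ :=
  ((DA n p g).card : ℝ)
  + (∑ A ∈ DA n p g, (α (ivl A) p + 1) / 2 ^ ((runs (ivl A) p true).card)) /
      ((DA n p g).card : ℝ)
  - β (((dom n).filter (fun i => p i = true ∧ g i = false)).card)
  - (1 / (t : ℝ)) * (((TA n p g).card : ℝ) + (3 / 2) * ((EA n p g).card : ℝ)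
      + (1 / 2) * ((LA n p g).card : ℝ))

/-- Point-wise Recall. -/
noncomputable def recallPW (n : ℕ) (g p : ℕ → Bool) : ℝ :=
  (((dom n).filter (fun i => p i = true ∧ g i = true)).card : ℝ) /
    ((ones (dom n) g).card : ℝ)

/-- Point-wise F1-score. -/
noncomputable def f1PW (n : ℕ) (g p : ℕ → Bool) : ℝ :=
  2 * (((dom n).filter (fun i => p i = true ∧ g i = true)).card : ℝ) /
    (((ones (dom n) p).card : ℝ) + ((ones (dom n) g).card : ℝ))

/-- Total length of the ground-truth anomaly windows hit by `p`. -/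
def Spa (n : ℕ) (g p : ℕ → Bool) : ℕ :=
  ∑ W ∈ (runs (dom n) g true).filter (fun W => ∃ i ∈ ivl W, p i = true), (ivl W).card

/-- Point-adjusted Recall. -/
noncomputable def recallPA (n : ℕ) (g p : ℕ → Bool) : ℝ :=
  ((Spa n g p : ℝ)) / ((ones (dom n) g).card : ℝ)

/-- Point-adjusted F1-score. -/
noncomputable def f1PA (n : ℕ) (g p : ℕ → Bool) : ℝ :=
  2 * (Spa n g p : ℝ) /
    ((Spa n g p : ℝ) + (((dom n).filter (fun i => p i = true ∧ g i = false)).card : ℝ)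
      + ((ones (dom n) g).card : ℝ))

/-- Point-wise Precision. -/
noncomputable def precisionPW (n : ℕ) (g p : ℕ → Bool) : ℝ :=
  (((dom n).filter (fun i => p i = true ∧ g i = true)).card : ℝ) /
    ((ones (dom n) p).card : ℝ)

/-- Event-wise Recall. -/
noncomputable def recallEvent (n : ℕ) (g p : ℕ → Bool) : ℝ :=
  (((runs (dom n) g true).filter (fun W => ∃ i ∈ ivl W, p i = true)).card : ℝ) /
    ((runs (dom n) g true).card : ℝ)

/-- Composite F1-score. -/
noncomputable def Fc1 (n : ℕ) (g p : ℕ → Bool) : ℝ :=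
  2 * precisionPW n g p * recallEvent n g p / (precisionPW n g p + recallEvent n g p)

/-- Distance from `i` to the closest element of `S`. -/
noncomputable def minDist (i : ℕ) (S : Finset ℕ) : ℕ :=
  sInf {d : ℕ | ∃ j ∈ S, d = ((i : ℤ) - (j : ℤ)).natAbs}

/-- Temporal Distance. -/
noncomputable def TD (n : ℕ) (g p : ℕ → Bool) : ℕ :=
  ∑ i ∈ ones (dom n) g, minDist i (ones (dom n) p)
  + ∑ i ∈ ones (dom n) p, minDist i (ones (dom n) g)

/-- The set of ground-truth anomaly windows hit by `p`. -/
def Dset (n : ℕ) (g p : ℕ → Bool) : Finset (ℕ × ℕ) :=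
  (runs (dom n) g true).filter (fun W => ∃ i ∈ ivl W, p i = true)

/-- Delay of the first alarm of `p` within the window `W`. -/
noncomputable def delay (p : ℕ → Bool) (W : ℕ × ℕ) : ℕ :=
  sInf {i : ℕ | i ∈ ivl W ∧ p i = true} - W.1

/-- Average Alert Delay. -/
noncomputable def AAD (n : ℕ) (g p : ℕ → Bool) : ℝ :=
  (∑ W ∈ Dset n g p, (delay p W : ℝ)) / ((Dset n g p).card : ℝ)


lemma mem_runs {A : Finset ℕ} {s : ℕ → Bool} {v : Bool} {W : ℕ × ℕ} :
    W ∈ runs A s v ↔ W.1 ∈ A ∧ W.2 ∈ A ∧ W.1 ≤ W.2 ∧ ivl W ⊆ A ∧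
      (∀ i ∈ ivl W, s i = v) ∧ (W.1 - 1 ∈ A → s (W.1 - 1) ≠ v) ∧
      (W.2 + 1 ∈ A → s (W.2 + 1) ≠ v) := by
  simp [runs, Finset.mem_filter, Finset.mem_product, and_assoc]

lemma run_unique {A : Finset ℕ} {s : ℕ → Bool} {v : Bool} {W W' : ℕ × ℕ}
    (hW : W ∈ runs A s v) (hW' : W' ∈ runs A s v) {i : ℕ}
    (h1 : i ∈ ivl W) (h2 : i ∈ ivl W') : W = W' := by
  rw [mem_runs] at hW hW'
  obtain ⟨-, -, -, hsub, hv, hl, hr⟩ := hW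
  obtain ⟨-, -, -, hsub', hv', hl', hr'⟩ := hW'
  simp only [ivl, Finset.mem_Icc] at h1 h2
  have e1 : W.1 = W'.1 := by
    by_contra hne
    rcases Nat.lt_or_ge W.1 W'.1 with h | h
    · exact hl' (hsub (by simp only [ivl, Finset.mem_Icc]; omega))
        (hv _ (by simp only [ivl, Finset.mem_Icc]; omega))
    · have h' : W'.1 < W.1 := by omega
      exact hl (hsub' (by simp only [ivl, Finset.mem_Icc]; omega))
        (hv' _ (by simp only [ivl, Finset.mem_Icc]; omega))
  have e2 : W.2 = W'.2 := by
    by_contra hne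
    rcases Nat.lt_or_ge W.2 W'.2 with h | h
    · exact hr (hsub' (by simp only [ivl, Finset.mem_Icc]; omega))
        (hv' _ (by simp only [ivl, Finset.mem_Icc]; omega))
    · have h' : W'.2 < W.2 := by omega
      exact hr' (hsub (by simp only [ivl, Finset.mem_Icc]; omega))
        (hv _ (by simp only [ivl, Finset.mem_Icc]; omega))
  exact Prod.ext e1 e2

lemma exists_run {a b i : ℕ} {s : ℕ → Bool} (ha : 1 ≤ a)
    (hia : a ≤ i) (hib : i ≤ b) (hs : s i = true) :
    (runs (Finset.Icc a b) s true).Nonempty := by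
  classical
  set L := (Finset.Icc a i).filter (fun j => ∀ k ∈ Finset.Icc j i, s k = true) with hL
  set U := (Finset.Icc i b).filter (fun j => ∀ k ∈ Finset.Icc i j, s k = true) with hU
  have hLne : L.Nonempty := by
    refine ⟨i, ?_⟩
    simp only [hL, Finset.mem_filter, Finset.mem_Icc]
    refine ⟨⟨hia, le_rfl⟩, fun k hk => ?_⟩
    have : k = i := le_antisymm hk.2 hk.1
    rwa [this]
  have hUne : U.Nonempty := by
    refine ⟨i, ?_⟩
    simp only [hU, Finset.mem_filter, Finset.mem_Icc]
    refine ⟨⟨le_rfl, hib⟩, fun k hk => ?_⟩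
    have : k = i := le_antisymm hk.2 hk.1
    rwa [this]
  obtain ⟨l, hlmem, hlmin⟩ : ∃ l ∈ L, ∀ j ∈ L, l ≤ j :=
    ⟨L.min' hLne, Finset.min'_mem _ _, fun j hj => Finset.min'_le _ j hj⟩
  obtain ⟨u, humem, humax⟩ : ∃ u ∈ U, ∀ j ∈ U, j ≤ u :=
    ⟨U.max' hUne, Finset.max'_mem _ _, fun j hj => Finset.le_max' _ j hj⟩
  rw [hL, Finset.mem_filter, Finset.mem_Icc] at hlmem
  rw [hU, Finset.mem_filter, Finset.mem_Icc] at humem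
  obtain ⟨⟨hal, hli⟩, hlrun⟩ := hlmem
  obtain ⟨⟨hiu, hub⟩, hurun⟩ := humem
  refine ⟨(l, u), ?_⟩
  rw [mem_runs]
  refine ⟨?_, ?_, ?_, ?_, ?_, ?_, ?_⟩
  · simp only [Finset.mem_Icc]; omega
  · simp only [Finset.mem_Icc]; omega
  · show l ≤ u; omega
  · intro k hk
    simp only [ivl, Finset.mem_Icc] at hk ⊢
    omega
  · intro k hk
    simp only [ivl, Finset.mem_Icc] at hk
    rcases le_or_gt k i with h | h
    · exact hlrun k (by simp only [Finset.mem_Icc]; omega)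
    · exact hurun k (by simp only [Finset.mem_Icc]; omega)
  · intro hmem hcon
    simp only [Finset.mem_Icc] at hmem
    simp only [ne_eq, not_not] at hcon
    have hmem' : l - 1 ∈ L := by
      simp only [hL, Finset.mem_filter, Finset.mem_Icc]
      refine ⟨⟨hmem.1, by omega⟩, fun k hk => ?_⟩
      rcases Nat.eq_or_lt_of_le hk.1 with h | h
      · rw [← h]; exact hcon
      · exact hlrun k (by simp only [Finset.mem_Icc]; omega)
    have := hlmin _ hmem'
    omega
  · intro hmem hcon
    simp only [Finset.mem_Icc] at hmem
    simp only [ne_eq, not_not] at hcon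
    have hmem' : u + 1 ∈ U := by
      simp only [hU, Finset.mem_filter, Finset.mem_Icc]
      refine ⟨⟨by omega, hmem.2⟩, fun k hk => ?_⟩
      rcases Nat.lt_or_ge k (u + 1) with h | h
      · exact hurun k (by simp only [Finset.mem_Icc]; omega)
      · have : k = u + 1 := by omega
        rw [this]; exact hcon
    have := humax _ hmem'
    omega

/-- Point-adjusted Recall satisfies Properties 1 (detection of anomalies) and
5 (invariance under permutation of false positives). -/
theorem recallPA_properties (n : ℕ) (hn : 1 ≤ n) (g : ℕ → Bool)
    (hg : 0 < (ones (dom n) g).card) :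
    (∀ p q : ℕ → Bool, ∀ A ∈ runs (dom n) g true,
      (∀ i ∈ dom n, i ∉ ivl A → p i = q i) →
      0 < (runs (ivl A) p true).card → (runs (ivl A) q true).card = 0 →
      recallPA n g p > recallPA n g q) ∧
    (∀ p q : ℕ → Bool, ∀ N ∈ runs (dom n) g false,
      (∀ i ∈ dom n, i ∉ ivl N → p i = q i) →
      (ones (dom n) p).card = (ones (dom n) q).card →
      (runs (ivl N) p true).card = (runs (ivl N) q true).card →
      recallPA n g p = recallPA n g q) := by
  classical
  constructor
  · intro p q A hA hpq hp hq
    have hA' := mem_runs.mp hA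
    obtain ⟨hA1, hA2, hAle, hAsub, hAv, -, -⟩ := hA'
    have hdom1 : 1 ≤ A.1 := by
      simp only [dom, Finset.mem_Icc] at hA1; exact hA1.1
    -- q takes no true value on ivl A
    have hqA : ∀ i ∈ ivl A, q i = false := by
      intro i hi
      by_contra hcon
      have hq' : q i = true := by
        cases hqi : q i
        · exact absurd hqi hcon
        · rfl
      simp only [ivl, Finset.mem_Icc] at hi
      have hne : (runs (ivl A) q true).Nonempty := exists_run hdom1 hi.1 hi.2 hq'
      rw [← Finset.card_pos] at hne
      omega
    -- p takes a true value on ivl A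
    have hpA : ∃ i ∈ ivl A, p i = true := by
      obtain ⟨W, hW⟩ := Finset.card_pos.mp hp
      rw [mem_runs] at hW
      obtain ⟨h1, h2, h3, h4, h5, -, -⟩ := hW
      exact ⟨W.1, h1, h5 W.1 (by simp only [ivl, Finset.mem_Icc]; omega)⟩
    have key : ∀ W ∈ runs (dom n) g true, W ≠ A →
        ((∃ i ∈ ivl W, p i = true) ↔ (∃ i ∈ ivl W, q i = true)) := by
      intro W hW hne
      have hag : ∀ i ∈ ivl W, p i = q i := by
        intro i hi
        have hiW : i ∈ dom n := (mem_runs.mp hW).2.2.2.1 hi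
        have hniA : i ∉ ivl A := fun hiA => hne (run_unique hW hA hi hiA)
        exact hpq i hiW hniA
      constructor
      · rintro ⟨i, hi, h⟩; exact ⟨i, hi, by rw [← hag i hi]; exact h⟩
      · rintro ⟨i, hi, h⟩; exact ⟨i, hi, by rw [hag i hi]; exact h⟩
    have hfil : (runs (dom n) g true).filter (fun W => ∃ i ∈ ivl W, p i = true)
        = insert A ((runs (dom n) g true).filter (fun W => ∃ i ∈ ivl W, q i = true)) := by
      ext W
      simp only [Finset.mem_filter, Finset.mem_insert]
      constructor
      · rintro ⟨hWF, hWp⟩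
        by_cases hne : W = A
        · exact Or.inl hne
        · exact Or.inr ⟨hWF, (key W hWF hne).mp hWp⟩
      · rintro (rfl | ⟨hWF, hWq⟩)
        · exact ⟨hA, hpA⟩
        · by_cases hne : W = A
          · subst hne; exact ⟨hWF, hpA⟩
          · exact ⟨hWF, (key W hWF hne).mpr hWq⟩
    have hAnot : A ∉ (runs (dom n) g true).filter (fun W => ∃ i ∈ ivl W, q i = true) := by
      simp only [Finset.mem_filter, not_and]
      rintro - ⟨i, hi, hqi⟩
      rw [hqA i hi] at hqi
      exact absurd hqi (by simp)
    have hSpa : Spa n g p = (ivl A).card + Spa n g q := by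
      rw [Spa, Spa, hfil, Finset.sum_insert hAnot]
    have hcard : 0 < (ivl A).card := by
      rw [ivl, Nat.card_Icc]; omega
    have hc : (0 : ℝ) < ((ones (dom n) g).card : ℝ) := by exact_mod_cast hg
    rw [gt_iff_lt, recallPA, recallPA, div_lt_div_iff₀ hc hc]
    have hlt : Spa n g q < Spa n g p := by omega
    have hlt' : (Spa n g q : ℝ) < (Spa n g p : ℝ) := by exact_mod_cast hlt
    nlinarith
  · intro p q N hN hpq _ _
    have hN' := mem_runs.mp hN
    obtain ⟨-, -, -, -, hNv, -, -⟩ := hN'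
    have hfil : (runs (dom n) g true).filter (fun W => ∃ i ∈ ivl W, p i = true)
        = (runs (dom n) g true).filter (fun W => ∃ i ∈ ivl W, q i = true) := by
      apply Finset.filter_congr
      intro W hW
      obtain ⟨-, -, -, hsub, hv, -, -⟩ := mem_runs.mp hW
      have hag : ∀ i ∈ ivl W, p i = q i := by
        intro i hi
        refine hpq i (hsub hi) (fun hiN => ?_)
        have h1 : g i = true := hv i hi
        have h2 : g i = false := hNv i hiN
        rw [h1] at h2
        exact absurd h2 (by simp)
      constructor
      · rintro ⟨i, hi, h⟩; exact ⟨i, hi, by rw [← hag i hi]; exact h⟩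
      · rintro ⟨i, hi, h⟩; exact ⟨i, hi, by rw [hag i hi]; exact h⟩
    rw [recallPA, recallPA, Spa, Spa, hfil]

end TSAD
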